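/- Let (g, h) be a Lie pair, E an h-module, and ∇ a g-connection on E extending the h-action. There exists an h-compatible g-connection on E, i.e., a g-connection ∇′ extending the h-action such that R^{∇′}(a, x) = 0 for all a ∈ h and x ∈ g, if and only if the Atiyah cocycle R̄^∇ is a Chevalley–Eilenberg 1-coboundary, i.e., there exists φ ∈ Hom(g/h, End(E)) with R̄^∇(a) = a · φ for all a ∈ h. -/

import Mathlib

/-!
Two connections extending the `h`-action differ by a linear map `g → End E` vanishing on `h`,
i.e. by some `φ ∈ Hom(g/h, End E)`, and conversely `∇ - φ` extends the `h`-action for every such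
`φ`. For `a ∈ h` the curvature changes under `∇ ↦ ∇ - φ` by exactly `R^{∇-φ}(a, ·) = R^∇(a, ·) - a · φ`,
so `∇ - φ` is `h`-compatible precisely when `R̄^∇ = d φ`.
-/

section ConnectionCurvature

variable {k g A : Type*} [CommRing k] [LieRing g] [LieAlgebra k g] [Ring A] [Module k A]

def connectionCurvature (D : g →ₗ[k] A) (x y : g) : A :=
  D x * D y - D y * D x - D ⁅x, y⁆

theorem connectionCurvature_sub {D φ : g →ₗ[k] A} {a : g} (ha : φ a = 0) (x : g) :
    connectionCurvature (D - φ) a x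
      = connectionCurvature D a x - (D a * φ x - φ x * D a - φ ⁅a, x⁆) := by
  simp only [connectionCurvature, LinearMap.sub_apply, ha, sub_zero]
  noncomm_ring

end ConnectionCurvature

attribute [local instance 100] LieRing.ofAssociativeRing

variable (K : Type*) [Field K] [CharZero K]

/-- Let `(g, h)` be a Lie pair, `E` an `h`-module, and `D` a `g`-connection on
`E` extending the `h`-action. There exists an `h`-compatible `g`-connection on `E` (one extending
the `h`-action with `R^{D'}(a, x) = 0` for all `a ∈ h`, `x ∈ g`) if and only if the Atiyah
cocycle `R̄^D` is a Chevalley–Eilenberg 1-coboundary. -/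
theorem atiyah_class_obstruction
    (g : Type*) [LieRing g] [LieAlgebra K g] (h : LieSubalgebra K g)
    (E : Type*) [AddCommGroup E] [Module K E]
    (ρ : h →ₗ⁅K⁆ Module.End K E)
    (D : g →ₗ[K] Module.End K E)
    (hext : ∀ a : h, D (a : g) = ρ a)
    (R : g → g → Module.End K E)
    (hR : ∀ x y : g, R x y = D x * D y - D y * D x - D ⁅x, y⁆) :
    (∃ D' : g →ₗ[K] Module.End K E,
      (∀ a : h, D' (a : g) = ρ a) ∧
      (∀ (a : h) (x : g), D' (a : g) * D' x - D' x * D' (a : g) - D' ⁅(a : g), x⁆ = 0)) ↔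
    (∃ φ : (g ⧸ h.toSubmodule) →ₗ[K] Module.End K E,
      ∀ (a : h) (x : g),
        R (a : g) x
          = ρ a * φ (Submodule.Quotient.mk x)
            - φ (Submodule.Quotient.mk x) * ρ a
            - φ (Submodule.Quotient.mk ⁅(a : g), x⁆)) := by
  have hRD : ∀ x y, R x y = connectionCurvature D x y := hR
  constructor
  · rintro ⟨D', hext', hflat⟩
    have hker : h.toSubmodule ≤ LinearMap.ker (D - D') := fun a ha => by
      simp [hext ⟨a, ha⟩, hext' ⟨a, ha⟩]
    refine ⟨h.toSubmodule.liftQ (D - D') hker, fun a x => ?_⟩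
    have hgauge := connectionCurvature_sub (D := D) (hker a.2) x
    rw [sub_sub_cancel, show connectionCurvature D' a x = 0 from hflat a x, eq_comm, sub_eq_zero,
      hext a] at hgauge
    simpa only [hRD, Submodule.liftQ_apply] using hgauge
  · rintro ⟨φ, hφ⟩
    have hφa : ∀ a : h, (φ ∘ₗ h.toSubmodule.mkQ) (a : g) = 0 := fun a => by
      simp [(Submodule.Quotient.mk_eq_zero _).2 a.2]
    refine ⟨D - φ ∘ₗ h.toSubmodule.mkQ, fun a => by simp [hφa a, hext a], fun a x => ?_⟩
    have hgauge := connectionCurvature_sub (D := D) (hφa a) x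
    rw [← hRD, hφ, hext a] at hgauge
    change connectionCurvature _ _ _ = 0
    rw [hgauge, LinearMap.comp_apply, LinearMap.comp_apply, Submodule.mkQ_apply, Submodule.mkQ_apply,
      sub_self]
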